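/- In a STRIPS task in which every action has only positive preconditions and exactly one effect (a single add or a single delete), if a plan exists from state s then a plan exists in which no action occurs more than once. -/

import Mathlib

/-- A STRIPS action: positive preconditions `pre`, negative preconditions `npre`,
add effect `add`, delete effect `del`, and a cost. -/
structure Act (V : Type) where
  pre : Finset V
  npre : Finset V
  add : Finset V
  del : Finset V
  cost : ℕ

variable {V : Type} [DecidableEq V]

/-- An action is applicable in a state iff its precondition holds. -/
def app (s : Finset V) (a : Act V) : Prop := a.pre ⊆ s ∧ Disjoint a.npre s

/-- Executing an action: s⟦a⟧ = (s \ del(a)) ∪ add(a). -/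
def exec (s : Finset V) (a : Act V) : Finset V := (s \ a.del) ∪ a.add

/-- Iterated execution of an action sequence. -/
def execSeq (s : Finset V) : List (Act V) → Finset V
  | [] => s
  | a :: π => execSeq (exec s a) π

/-- Iterated applicability of an action sequence. -/
def appSeq (s : Finset V) : List (Act V) → Prop
  | [] => True
  | a :: π => app s a ∧ appSeq (exec s a) π

/-- The cost of an action sequence. -/
def listCost (π : List (Act V)) : ℕ := (π.map Act.cost).sum

lemma execSeq_append (s : Finset V) (π ρ : List (Act V)) :
    execSeq s (π ++ ρ) = execSeq (execSeq s π) ρ := by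
  induction π generalizing s with
  | nil => rfl
  | cons a π ih => exact ih (exec s a)

lemma appSeq_append (s : Finset V) (π ρ : List (Act V)) :
    appSeq s (π ++ ρ) ↔ appSeq s π ∧ appSeq (execSeq s π) ρ := by
  induction π generalizing s with
  | nil => simp [appSeq, execSeq]
  | cons a π ih => simp [appSeq, execSeq, ih, and_assoc]

lemma execSeq_concat (s : Finset V) (π : List (Act V)) (a : Act V) :
    execSeq s (π ++ [a]) = exec (execSeq s π) a :=
  execSeq_append s π [a]

lemma appSeq_concat (s : Finset V) (π : List (Act V)) (a : Act V) :
    appSeq s (π ++ [a]) ↔ appSeq s π ∧ app (execSeq s π) a := by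
  simp [appSeq_append, appSeq]

omit [DecidableEq V] in
lemma app_mono {s t : Finset V} {a : Act V} (ha : a.npre = ∅) (hst : s ⊆ t) (h : app s a) :
    app t a :=
  ⟨h.1.trans hst, by simp [ha]⟩

lemma exec_mono {s t : Finset V} (hst : s ⊆ t) (a : Act V) : exec s a ⊆ exec t a :=
  Finset.union_subset_union (Finset.sdiff_subset_sdiff hst le_rfl) le_rfl

lemma exec_subset_of_add_eq_empty (s : Finset V) {a : Act V} (ha : a.add = ∅) :
    exec s a ⊆ s := by
  simp [exec, ha]

lemma exec_of_del_eq_empty (s : Finset V) {a : Act V} (ha : a.del = ∅) :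
    exec s a = s ∪ a.add := by
  simp [exec, ha]

lemma subset_execSeq {π : List (Act V)} (hπ : ∀ a ∈ π, a.del = ∅) (s : Finset V) :
    s ⊆ execSeq s π := by
  induction π generalizing s with
  | nil => exact subset_rfl
  | cons a π ih =>
    calc s ⊆ exec s a := by simp [exec_of_del_eq_empty s (hπ a List.mem_cons_self)]
      _ ⊆ execSeq (exec s a) π := ih (fun b hb => hπ b (List.mem_cons_of_mem a hb)) _

lemma add_subset_execSeq_of_mem {π : List (Act V)} (hπ : ∀ a ∈ π, a.del = ∅)
    (s : Finset V) {a : Act V} (ha : a ∈ π) : a.add ⊆ execSeq s π := by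
  obtain ⟨ρ, σ, rfl⟩ := List.append_of_mem ha
  have hσ : ∀ b ∈ σ, b.del = ∅ := fun b hb => hπ b (by simp [hb])
  calc a.add ⊆ exec (execSeq s ρ) a := by simp [exec]
    _ ⊆ execSeq s (ρ ++ a :: σ) := by
      rw [execSeq_append]
      exact subset_execSeq hσ _

/-- With positive preconditions a larger state enables at least the same actions, so pure
deletions, which only shrink the state, can be dropped; in a delete-free plan the effect of an action
persists, so its later occurrences are no-ops and can be dropped too. -/
theorem exists_nodup_deleteFree_subplan {π : List (Act V)}
    (hπ : ∀ a ∈ π, a.npre = ∅ ∧ (a.del = ∅ ∨ a.add = ∅)) {s : Finset V} (happ : appSeq s π) :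
    ∃ π', π'.Sublist π ∧ π'.Nodup ∧ (∀ a ∈ π', a.del = ∅) ∧ appSeq s π' ∧
      execSeq s π ⊆ execSeq s π' := by
  induction π using List.reverseRecOn with
  | nil => exact ⟨[], List.Sublist.slnil, List.nodup_nil, by simp, trivial, subset_rfl⟩
  | append_singleton ρ a ih =>
    rw [appSeq_concat] at happ
    obtain ⟨ρ', hsub, hnodup, hdel, happ', hexec⟩ :=
      ih (fun b hb => hπ b (by simp [hb])) happ.1
    obtain ⟨hnpre, hadel | haadd⟩ := hπ a (by simp)
    · by_cases haρ' : a ∈ ρ'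
      · refine ⟨ρ', hsub.trans (List.sublist_append_left ρ [a]), hnodup, hdel, happ', ?_⟩
        calc execSeq s (ρ ++ [a]) ⊆ exec (execSeq s ρ') a := by
              rw [execSeq_concat]; exact exec_mono hexec a
          _ = execSeq s ρ' := by
              rw [exec_of_del_eq_empty _ hadel, Finset.union_eq_left]
              exact add_subset_execSeq_of_mem hdel s haρ'
      · refine ⟨ρ' ++ [a], hsub.append_right [a], ?_, ?_, ?_, ?_⟩
        · rw [← List.concat_eq_append]; exact List.nodup_concat ρ' a |>.2 ⟨haρ', hnodup⟩
        · simpa [or_imp, forall_and] using ⟨hdel, hadel⟩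
        · exact (appSeq_concat s ρ' a).2 ⟨happ', app_mono hnpre hexec happ.2⟩
        · rw [execSeq_concat, execSeq_concat]; exact exec_mono hexec a
    · refine ⟨ρ', hsub.trans (List.sublist_append_left ρ [a]), hnodup, hdel, happ', ?_⟩
      rw [execSeq_concat]
      exact (exec_subset_of_add_eq_empty _ haadd).trans hexec

/-- Positive preconditions and a single effect per action: if a plan exists from s,
then a plan exists in which no action occurs more than once. -/
theorem posPre_oneEff_nodupPlan (A : Finset (Act V)) (s G : Finset V)
    (hA : ∀ a ∈ A, a.npre = ∅ ∧
      ((∃ v, a.add = {v} ∧ a.del = ∅) ∨ (∃ v, a.add = ∅ ∧ a.del = {v})))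
    (h : ∃ π, (∀ a ∈ π, a ∈ A) ∧ appSeq s π ∧ G ⊆ execSeq s π) :
    ∃ π, (∀ a ∈ π, a ∈ A) ∧ π.Nodup ∧ appSeq s π ∧ G ⊆ execSeq s π := by
  obtain ⟨π, hπA, happ, hG⟩ := h
  have hπ : ∀ a ∈ π, a.npre = ∅ ∧ (a.del = ∅ ∨ a.add = ∅) := by
    intro a ha
    obtain ⟨hnpre, ⟨_, _, hdel⟩ | ⟨_, hadd, _⟩⟩ := hA a (hπA a ha)
    exacts [⟨hnpre, .inl hdel⟩, ⟨hnpre, .inr hadd⟩]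
  obtain ⟨π', hsub, hnodup, -, happ', hexec⟩ := exists_nodup_deleteFree_subplan hπ happ
  exact ⟨π', fun a ha => hπA a (hsub.subset ha), hnodup, happ', hG.trans hexec⟩
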